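/- arXiv:2107.11518 — 3 statements merged into one kernel-verified Lean document; each statement's English description precedes it below -/
import Mathlib

section
/- Let n ≥ 5 be an integer. Let Q(t) = 1 + Σ_{k=2}^{n−1} b_k t^k + t^n be a real polynomial with all coefficients b_k ≥ 0, and let P(t) = Σ_{k=2}^{ℓ} a_k t^k be a real polynomial with all coefficients a_k ≥ 0, degree bound ℓ ≤ 2n − 1, and P(1) ≤ n. Then for every integer m ≥ n and every real t ≥ 1, one has m·P(t) < Q(t)^m. -/
/-!
With `x = tⁿ ≥ 1`, the degree bound and `P 1 ≤ n ≤ m` give `m * P t ≤ m² t^(2n-1) ≤ m² x²`,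
while `Q t ≥ 1 + x` because `Q` has nonnegative coefficients. So it suffices that
`m² x² < (1 + x)^m` for `x ≥ 1` and `m ≥ 5`, which follows by induction on `m`.
-/

open Finset

lemma sum_mul_pow_le_sum_mul_pow {s : Finset ℕ} {a : ℕ → ℝ} (ha : ∀ k, 0 ≤ a k)
    {t : ℝ} (ht : 1 ≤ t) {N : ℕ} (hN : ∀ k ∈ s, k ≤ N) :
    ∑ k ∈ s, a k * t ^ k ≤ (∑ k ∈ s, a k) * t ^ N := by
  rw [sum_mul]
  exact sum_le_sum fun k hk => mul_le_mul_of_nonneg_left (pow_le_pow_right₀ ht (hN k hk)) (ha k)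

lemma one_add_sq_mul_sq_le_one_add_pow {x : ℝ} (hx : 1 ≤ x) {m : ℕ} (hm : 5 ≤ m) :
    1 + (m : ℝ) ^ 2 * x ^ 2 ≤ (1 + x) ^ m := by
  induction m, hm using Nat.le_induction with
  | base =>
    have h3 := pow_le_pow_right₀ hx (show 2 ≤ 3 by norm_num)
    have h4 := pow_le_pow_right₀ hx (show 2 ≤ 4 by norm_num)
    have h5 := pow_le_pow_right₀ hx (show 2 ≤ 5 by norm_num)
    push_cast
    nlinarith
  | succ m hm ih =>
    have hm5 : (5 : ℝ) ≤ m := by exact_mod_cast hm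
    -- `(m+1)² x² ≤ m² x² (1 + x)` since `m² x³ ≥ m² x²` and `m² ≥ 2m + 1`.
    have hstep : 1 + ((m : ℝ) + 1) ^ 2 * x ^ 2 ≤ (1 + (m : ℝ) ^ 2 * x ^ 2) * (1 + x) := by
      have hA : 0 ≤ (m : ℝ) ^ 2 * x ^ 2 * (x - 1) := mul_nonneg (by positivity) (by linarith)
      have hB : 0 ≤ ((m : ℝ) ^ 2 - 2 * m - 1) * x ^ 2 := mul_nonneg (by nlinarith) (sq_nonneg x)
      nlinarith
    push_cast
    rw [pow_succ]
    exact hstep.trans (mul_le_mul_of_nonneg_right ih (by linarith))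

theorem stmt_6 (n : ℕ) (hn : 5 ≤ n) (ℓ : ℕ) (hℓ : ℓ ≤ 2 * n - 1)
    (a b : ℕ → ℝ) (ha : ∀ k, 0 ≤ a k) (hb : ∀ k, 0 ≤ b k)
    (P Q : ℝ → ℝ)
    (hPdef : ∀ t : ℝ, P t = ∑ k ∈ Finset.Icc 2 ℓ, a k * t ^ k)
    (hQdef : ∀ t : ℝ, Q t = 1 + (∑ k ∈ Finset.Icc 2 (n - 1), b k * t ^ k) + t ^ n)
    (hP1 : P 1 ≤ (n : ℝ)) :
    ∀ m : ℕ, n ≤ m → ∀ t : ℝ, 1 ≤ t → (m : ℝ) * P t < Q t ^ m := by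
  intro m hm t ht
  have hmn : (n : ℝ) ≤ m := by exact_mod_cast hm
  have hx : 1 ≤ t ^ n := one_le_pow₀ ht
  have hPt : P t ≤ m * (t ^ n) ^ 2 := calc
    P t ≤ P 1 * t ^ (2 * n - 1) := by
      simpa [hPdef] using sum_mul_pow_le_sum_mul_pow ha ht fun k hk => (mem_Icc.mp hk).2.trans hℓ
    _ ≤ m * (t ^ n) ^ 2 := by
      rw [← pow_mul]
      exact mul_le_mul (hP1.trans hmn) (pow_le_pow_right₀ ht (by omega))
        (by positivity) (by positivity)
  have hQt : 1 + t ^ n ≤ Q t := by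
    have : 0 ≤ ∑ k ∈ Icc 2 (n - 1), b k * t ^ k :=
      sum_nonneg fun k _ => mul_nonneg (hb k) (by positivity)
    linarith [hQdef t]
  calc (m : ℝ) * P t ≤ m ^ 2 * (t ^ n) ^ 2 := by
        exact (mul_le_mul_of_nonneg_left hPt m.cast_nonneg).trans_eq (by ring)
    _ < 1 + m ^ 2 * (t ^ n) ^ 2 := lt_one_add _
    _ ≤ (1 + t ^ n) ^ m := one_add_sq_mul_sq_le_one_add_pow hx (hn.trans hm)
    _ ≤ Q t ^ m := pow_le_pow_left₀ (by positivity) hQt m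
end

section
/- Let n ≥ 1 be an integer. Then: (i) for every integer m ≥ 2 and every real t ≥ 1, m·2·(t^{2n} + t^{4n−1}) < (1 + t^{2n})^{2m}; and (ii) at t = 1 one has 2·(t^{2n} + t^{4n−1}) = (1 + t^{2n})², so the strict inequality with m = 1 fails. Consequently the stabilization threshold 𝔭𝔭(S^{2n} × S^{2n}; 1) equals 2, showing that 𝔭𝔭(X×Y;ε) can be strictly smaller than max{𝔭𝔭(X;ε), 𝔭𝔭(Y;ε)}. -/
lemma four_mul_lt_four_pow : ∀ m : ℕ, 2 ≤ m → 4 * m < 4 ^ m := by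
  intro m hm
  induction m with
  | zero => omega
  | succ k ih =>
    rcases Nat.lt_or_ge k 2 with h | h
    · have hk : k = 1 := by omega
      subst hk; norm_num
    · have h1 := ih h
      have h2 : 4 ^ (k + 1) = 4 * 4 ^ k := by ring
      omega

lemma main_ineq (n : ℕ) (hn : 1 ≤ n) (m : ℕ) (hm : 2 ≤ m) (t : ℝ) (ht : 1 ≤ t) :
    (m : ℝ) * (2 * (t ^ (2 * n) + t ^ (4 * n - 1))) <
      ((1 + t ^ (2 * n)) ^ 2) ^ m := by
  set a : ℝ := t ^ (2 * n) with ha_def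
  have ht0 : (0 : ℝ) ≤ t := by linarith
  have ha : 1 ≤ a := one_le_pow₀ ht
  have ha0 : (0 : ℝ) ≤ a := by linarith
  have hsq : a ^ 2 = t ^ (4 * n) := by
    rw [ha_def, ← pow_mul]; ring_nf
  have h1 : t ^ (4 * n - 1) ≤ a ^ 2 := by
    rw [hsq]; exact pow_le_pow_right₀ ht (by omega)
  have h2 : (4 : ℝ) * a ≤ (1 + a) ^ 2 := by nlinarith [sq_nonneg (1 - a)]
  have h3 : ((4 : ℝ) * a) ^ m ≤ ((1 + a) ^ 2) ^ m :=
    pow_le_pow_left₀ (by positivity) h2 m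
  have h4 : ((4 : ℝ) * a) ^ m = 4 ^ m * a ^ m := mul_pow 4 a m
  have h5 : a ^ 2 ≤ a ^ m := pow_le_pow_right₀ ha hm
  have h6 : (4 : ℝ) * m < 4 ^ m := by
    have := four_mul_lt_four_pow m hm
    exact_mod_cast this
  have ha2 : (0 : ℝ) < a ^ 2 := by positivity
  calc (m : ℝ) * (2 * (t ^ (2 * n) + t ^ (4 * n - 1)))
      ≤ (m : ℝ) * (2 * (a ^ 2 + a ^ 2)) := by
        have hle : a ≤ a ^ 2 := by nlinarith
        have hm0 : (0 : ℝ) ≤ (m : ℝ) := Nat.cast_nonneg m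
        nlinarith
    _ = ((4 : ℝ) * m) * a ^ 2 := by ring
    _ < (4 : ℝ) ^ m * a ^ 2 := by nlinarith
    _ ≤ (4 : ℝ) ^ m * a ^ m := by
        have : (0 : ℝ) ≤ (4 : ℝ) ^ m := by positivity
        nlinarith
    _ = ((4 : ℝ) * a) ^ m := h4.symm
    _ ≤ ((1 + a) ^ 2) ^ m := h3

theorem stmt_13 (n : ℕ) (hn : 1 ≤ n) :
    (∀ m : ℕ, 2 ≤ m → ∀ t : ℝ, 1 ≤ t →
        (m : ℝ) * (2 * (t ^ (2 * n) + t ^ (4 * n - 1))) <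
          ((1 + t ^ (2 * n)) ^ 2) ^ m) ∧
    ((1 : ℝ) * (2 * ((1 : ℝ) ^ (2 * n) + (1 : ℝ) ^ (4 * n - 1))) =
        ((1 + (1 : ℝ) ^ (2 * n)) ^ 2) ^ 1) ∧
    ¬ (∀ t : ℝ, 1 ≤ t →
        (1 : ℝ) * (2 * (t ^ (2 * n) + t ^ (4 * n - 1))) <
          ((1 + t ^ (2 * n)) ^ 2) ^ 1) ∧
    IsLeast {n₀ : ℕ | 0 < n₀ ∧ ∀ m : ℕ, n₀ ≤ m → ∀ t : ℝ, 1 ≤ t →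
        (m : ℝ) * (2 * (t ^ (2 * n) + t ^ (4 * n - 1))) <
          ((1 + t ^ (2 * n)) ^ 2) ^ m} 2 := by
  refine ⟨fun m hm t ht => main_ineq n hn m hm t ht, by norm_num, ?_, ?_, ?_⟩
  · intro h
    have := h 1 le_rfl
    norm_num at this
  · exact ⟨by norm_num, fun m hm t ht => main_ineq n hn m hm t ht⟩
  · intro n₀ hn₀
    simp only [Set.mem_setOf_eq] at hn₀
    by_contra h
    have hn₀1 : n₀ = 1 := by omega
    have := hn₀.2 1 (by omega) 1 le_rfl
    norm_num at this
end

section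
/- Let n ≥ 2 be an integer. Then for every integer m ≥ 2, every real t ≥ 1, and all positive reals u, v with u·v ≥ 1, one has m·(t²uv + t^{2n+1}(uv)^{n+1}) < (Σ_{j=0}^{n} t^{2j}(uv)^j)^m. -/
/-! With `a = t²uv ≥ 1` the right-hand side is `S ^ m` for the geometric sum `S = ∑_{j ≤ n} a ^ j`,
and the left-hand side is at most `m (a + a ^ (n + 1))`. Since `n ≥ 2`, the sum `S` contains the
three distinct terms `1, a, a ^ n`, and `(1 + a + a ^ n) ^ 2` already exceeds `2 (a + a ^ (n + 1))`;
this settles `m = 2`, and from there on each extra factor `S ≥ 2` more than pays for the extra summand. -/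

theorem nat_mul_lt_pow_of_two_mul_lt_sq {S c : ℝ} (hS : 2 ≤ S) (hc : 2 * c < S ^ 2) {m : ℕ}
    (hm : 2 ≤ m) : (m : ℝ) * c < S ^ m := by
  induction m, hm using Nat.le_induction with
  | base => exact_mod_cast hc
  | succ k hk ih =>
    have hSk : S ^ 2 ≤ S ^ k := pow_le_pow_right₀ (by linarith) hk
    calc ((k + 1 : ℕ) : ℝ) * c = k * c + c := by push_cast; ring
      _ < S ^ k + S ^ k * (S - 1) := by nlinarith
      _ = S ^ (k + 1) := by ring

theorem one_add_add_pow_le_sum_range_pow {a : ℝ} (ha : 0 ≤ a) {n : ℕ} (hn : 2 ≤ n) :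
    1 + a + a ^ n ≤ ∑ j ∈ Finset.range (n + 1), a ^ j := by
  have hlow : ∑ j ∈ Finset.range 2, a ^ j ≤ ∑ j ∈ Finset.range n, a ^ j :=
    Finset.sum_le_sum_of_subset_of_nonneg (Finset.range_subset_range.mpr hn)
      fun j _ _ => pow_nonneg ha j
  rw [Finset.sum_range_succ]
  simpa [Finset.sum_range_succ] using hlow

theorem two_mul_add_pow_succ_lt_sq {a : ℝ} (ha : 0 ≤ a) (n : ℕ) :
    2 * (a + a ^ (n + 1)) < (1 + a + a ^ n) ^ 2 := by
  have hb := pow_nonneg ha n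
  rw [pow_succ']
  nlinarith [sq_nonneg a, sq_nonneg (a ^ n)]

theorem nat_mul_add_pow_succ_lt_sum_range_pow {a : ℝ} (ha : 1 ≤ a) {n : ℕ} (hn : 2 ≤ n)
    {m : ℕ} (hm : 2 ≤ m) :
    (m : ℝ) * (a + a ^ (n + 1)) < (∑ j ∈ Finset.range (n + 1), a ^ j) ^ m := by
  have hS := one_add_add_pow_le_sum_range_pow (by linarith) hn
  have hpow : 1 ≤ a ^ n := one_le_pow₀ ha
  refine nat_mul_lt_pow_of_two_mul_lt_sq (by linarith) ?_ hm
  calc 2 * (a + a ^ (n + 1)) < (1 + a + a ^ n) ^ 2 := two_mul_add_pow_succ_lt_sq (by linarith) n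
    _ ≤ _ := by gcongr

theorem stmt_14 (n : ℕ) (hn : 2 ≤ n) :
    ∀ m : ℕ, 2 ≤ m → ∀ t u v : ℝ, 1 ≤ t → 0 < u → 0 < v → 1 ≤ u * v →
      (m : ℝ) * (t ^ 2 * (u * v) + t ^ (2 * n + 1) * (u * v) ^ (n + 1)) <
        (∑ j ∈ Finset.range (n + 1), t ^ (2 * j) * (u * v) ^ j) ^ m := by
  intro m hm t u v ht _ _ huv
  have hsum : ∑ j ∈ Finset.range (n + 1), t ^ (2 * j) * (u * v) ^ j
      = ∑ j ∈ Finset.range (n + 1), (t ^ 2 * (u * v)) ^ j :=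
    Finset.sum_congr rfl fun j _ => by rw [mul_pow (t ^ 2), pow_mul]
  have hlhs : t ^ 2 * (u * v) + t ^ (2 * n + 1) * (u * v) ^ (n + 1)
      ≤ t ^ 2 * (u * v) + (t ^ 2 * (u * v)) ^ (n + 1) := by
    rw [mul_pow (t ^ 2), ← pow_mul]
    gcongr
    omega
  have ha : 1 ≤ t ^ 2 * (u * v) := one_le_mul_of_one_le_of_one_le (one_le_pow₀ ht) huv
  rw [hsum]
  calc (m : ℝ) * (t ^ 2 * (u * v) + t ^ (2 * n + 1) * (u * v) ^ (n + 1))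
      ≤ m * (t ^ 2 * (u * v) + (t ^ 2 * (u * v)) ^ (n + 1)) := by gcongr
    _ < _ := nat_mul_add_pow_succ_lt_sum_range_pow ha hn hm
end
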